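/- Let ψ : [t₀,∞) → ℝ₊ be non-increasing with t·ψ(t) < 1 for all t ≥ t₀, and set Ψ(t) = 1/(1 − t·ψ(t)) − 1. If x ∈ [0,1) is irrational and a_{n+1}(x)·aₙ(x) > Ψ(qₙ(x)) for infinitely many n, then x is not ψ-Dirichlet improvable. -/

import Mathlib

open Set MeasureTheory Filter

/-- The Gauss map `T(x) = 1/x - ⌊1/x⌋` (with `T 0 = 0`). -/
noncomputable def gaussMap (x : ℝ) : ℝ := Int.fract x⁻¹

/-- The `n`-th partial quotient `aₙ(x)` (indexed from `n = 1`). -/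
noncomputable def cfA (x : ℝ) (n : ℕ) : ℕ := ⌊(gaussMap^[n - 1] x)⁻¹⌋₊

/-- Numerators `pₙ` of the convergents of `[b 1, b 2, ...]`:
`p₀ = 0`, `p₁ = 1` (since `p₋₁ = 1`), `p_{n+2} = b (n+2) p_{n+1} + pₙ`. -/
def cfP (b : ℕ → ℕ) : ℕ → ℕ
  | 0 => 0
  | 1 => 1
  | n + 2 => b (n + 2) * cfP b (n + 1) + cfP b n

/-- Denominators (continuants) `qₙ` of the convergents of `[b 1, b 2, ...]`:
`q₀ = 1`, `q₁ = b 1`, `q_{n+2} = b (n+2) q_{n+1} + qₙ`. -/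
def cfQ (b : ℕ → ℕ) : ℕ → ℕ
  | 0 => 1
  | 1 => b 1
  | n + 2 => b (n + 2) * cfQ b (n + 1) + cfQ b n

/-- The cylinder `Iₙ(b 1, ..., b n)` of order `n`. -/
noncomputable def cfCyl (b : ℕ → ℕ) (n : ℕ) : Set ℝ :=
  {x ∈ Set.Ico (0 : ℝ) 1 | ∀ i, 1 ≤ i → i ≤ n → cfA x i = b i}

/-- `x` is `ψ`-Dirichlet improvable: for all sufficiently large `t` the system
`|qx - p| < ψ(t)`, `|q| < t` has a nontrivial integer solution. -/
def DirichletImprovable (ψ : ℝ → ℝ) (x : ℝ) : Prop :=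
  ∃ N : ℝ, ∀ t : ℝ, N < t → ∃ p q : ℤ, q ≠ 0 ∧ |(q : ℝ) * x - p| < ψ t ∧ |(q : ℝ)| < t


/-!
Let `Dₘ = |qₘ x - pₘ| = x · Tx ⋯ Tᵐx`. The identity `qₘ₊₁ Dₘ + qₘ Dₘ₊₁ = 1` together with
`Dₘ₊₁ = Dₘ Tᵐ⁺¹x` gives `Dₘ = 1 / (qₘ₊₁ + qₘ Tᵐ⁺¹x)`, and the bounds `aₘ₊₁ qₘ ≤ qₘ₊₁`,
`aₘ₊₂ Tᵐ⁺¹x < 1` turn `Ψ(qₘ₊₁) < aₘ₊₂ aₘ₊₁` into `ψ(qₘ₊₁) < Dₘ`. By the best approximation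
property of convergents, `|qx - p| ≥ Dₘ` whenever `0 < |q| < qₘ₊₁`, so the system has no
solution at `t = qₘ₊₁`, for arbitrarily large `qₘ₊₁`.
-/

section Continuants

variable (b : ℕ → ℕ)

theorem cfQ_succ_succ (n : ℕ) : cfQ b (n + 2) = b (n + 2) * cfQ b (n + 1) + cfQ b n := rfl

theorem cfP_succ_succ (n : ℕ) : cfP b (n + 2) = b (n + 2) * cfP b (n + 1) + cfP b n := rfl

theorem mul_cfQ_le_cfQ_succ (n : ℕ) : b (n + 1) * cfQ b n ≤ cfQ b (n + 1) := by
  cases n with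
  | zero => simp [cfQ]
  | succ n => rw [cfQ_succ_succ]; exact Nat.le_add_right _ _

theorem cfP_succ_mul_cfQ_sub (n : ℕ) :
    (cfP b (n + 1) : ℤ) * cfQ b n - cfP b n * cfQ b (n + 1) = (-1) ^ n := by
  induction n with
  | zero => simp [cfP, cfQ]
  | succ n ih =>
    rw [cfP_succ_succ, cfQ_succ_succ, pow_succ, ← ih]
    push_cast
    ring

variable {b}

theorem one_le_cfQ (hb : ∀ i, 1 ≤ b i) : ∀ n, 1 ≤ cfQ b n
  | 0 => le_rfl
  | 1 => hb 1
  | n + 2 => by have := one_le_cfQ hb n; rw [cfQ_succ_succ]; nlinarith [hb (n + 2)]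

theorem le_cfQ (hb : ∀ i, 1 ≤ b i) : ∀ n, n ≤ cfQ b n
  | 0 => Nat.zero_le _
  | 1 => hb 1
  | n + 2 => by
    have := le_cfQ hb (n + 1)
    have := one_le_cfQ hb n
    rw [cfQ_succ_succ]
    nlinarith [hb (n + 2)]

theorem tendsto_cfQ_atTop (hb : ∀ i, 1 ≤ b i) :
    Tendsto (fun n ↦ (cfQ b n : ℝ)) atTop atTop :=
  tendsto_atTop_mono (fun n ↦ by exact_mod_cast le_cfQ hb n) tendsto_natCast_atTop_atTop

end Continuants

theorem abs_le_abs_add_of_mul_nonneg {R : Type*} [CommRing R] [LinearOrder R]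
    [IsStrictOrderedRing R] {a b : R} (h : 0 ≤ a * b) : |a| ≤ |a + b| :=
  sq_le_sq.1 (by nlinarith [sq_nonneg b])

/-- Write `(s, r) = α (q, p) + β (q', p')`; `|s| < q'` forces `α ≠ 0` and `α β ≤ 0`, so the two
terms of `s x - r = α (q x - p) + β (q' x - p')` have the same sign. -/
theorem abs_mul_sub_le_of_unimodular {x : ℝ} {p q p' q' r s : ℤ} (hq : 0 ≤ q)
    (hdet : |p' * q - p * q'| = 1) (hsign : ((q : ℝ) * x - p) * (q' * x - p') ≤ 0)
    (hs : s ≠ 0) (hsq' : |s| < q') :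
    |(q : ℝ) * x - p| ≤ |(s : ℝ) * x - r| := by
  have hq' : 0 < q' := (abs_nonneg s).trans_lt hsq'
  obtain ⟨ε, hε, hdet⟩ : ∃ ε : ℤ, ε * ε = 1 ∧ p' * q - p * q' = ε := by
    rcases abs_eq (zero_le_one' ℤ) |>.1 hdet with h | h <;> exact ⟨_, by simp, h⟩
  obtain ⟨α, β, hs_eq, hr_eq⟩ : ∃ α β : ℤ, s = α * q + β * q' ∧ r = α * p + β * p' :=
    ⟨ε * (p' * s - q' * r), ε * (q * r - p * s),
      by linear_combination (-s) * hε - s * ε * hdet,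
      by linear_combination (-r) * hε - r * ε * hdet⟩
  have large_of_nonneg : β ≠ 0 → 0 ≤ α * β → q' ≤ |s| := fun hβ hαβ ↦
    calc q' ≤ |β| * q' := le_mul_of_one_le_left (by omega) (Int.one_le_abs hβ)
      _ = |β * q'| := by rw [abs_mul, abs_of_pos hq']
      _ ≤ |β * q' + α * q| :=
        abs_le_abs_add_of_mul_nonneg (by nlinarith [mul_nonneg hαβ (mul_nonneg hq hq'.le)])
      _ = |s| := by rw [hs_eq, add_comm]
  have hα : α ≠ 0 := by
    intro hα
    have hβ : β ≠ 0 := by rintro hβ; simp [hα, hβ] at hs_eq; exact hs hs_eq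
    exact (large_of_nonneg hβ (by simp [hα])).not_gt hsq'
  have hαβ : α * β ≤ 0 := by
    by_contra! hαβ
    exact (large_of_nonneg (right_ne_zero_of_mul hαβ.ne') hαβ.le).not_gt hsq'
  have hsplit : (s : ℝ) * x - r = α * (q * x - p) + β * (q' * x - p') := by
    rw [hs_eq, hr_eq]; push_cast; ring
  have hα' : (1 : ℝ) ≤ |(α : ℝ)| := by exact_mod_cast Int.one_le_abs hα
  calc |(q : ℝ) * x - p| ≤ |(α : ℝ)| * |(q : ℝ) * x - p| := le_mul_of_one_le_left (abs_nonneg _) hα'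
    _ = |α * ((q : ℝ) * x - p)| := (abs_mul _ _).symm
    _ ≤ |(s : ℝ) * x - r| := by
      rw [hsplit]
      refine abs_le_abs_add_of_mul_nonneg ?_
      have : ((α * β : ℤ) : ℝ) ≤ 0 := by exact_mod_cast hαβ
      push_cast at this
      nlinarith

section GaussMap

theorem irrational_gaussMap {y : ℝ} (hy : Irrational y) : Irrational (gaussMap y) :=
  hy.inv.sub_intCast _

theorem gaussMap_mem_Ioo {y : ℝ} (hy : Irrational y) : gaussMap y ∈ Ioo 0 1 :=
  ⟨(Int.fract_nonneg _).lt_of_ne' (irrational_gaussMap hy).ne_zero, Int.fract_lt_one _⟩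

variable {x : ℝ}

theorem irrational_gaussMap_iterate (hx : Irrational x) (n : ℕ) : Irrational (gaussMap^[n] x) := by
  induction n with
  | zero => exact hx
  | succ n ih => rw [Function.iterate_succ_apply']; exact irrational_gaussMap ih

theorem gaussMap_iterate_mem_Ioo (hx : x ∈ Ico 0 1) (hirr : Irrational x) :
    ∀ n, gaussMap^[n] x ∈ Ioo 0 1
  | 0 => ⟨hx.1.lt_of_ne' hirr.ne_zero, hx.2⟩
  | n + 1 => by
    rw [Function.iterate_succ_apply']
    exact gaussMap_mem_Ioo (irrational_gaussMap_iterate hirr n)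

theorem inv_gaussMap_iterate (hx : x ∈ Ico 0 1) (hirr : Irrational x) (n : ℕ) :
    (gaussMap^[n] x)⁻¹ = cfA x (n + 1) + gaussMap^[n + 1] x := by
  have hpos := (inv_pos.2 (gaussMap_iterate_mem_Ioo hx hirr n).1).le
  rw [Function.iterate_succ_apply', gaussMap, cfA, Nat.add_sub_cancel,
    natCast_floor_eq_intCast_floor hpos, Int.floor_add_fract]

theorem one_le_cfA (hx : x ∈ Ico 0 1) (hirr : Irrational x) (n : ℕ) : 1 ≤ cfA x n := by
  obtain ⟨hpos, hlt⟩ := gaussMap_iterate_mem_Ioo hx hirr (n - 1)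
  exact Nat.le_floor (by exact_mod_cast ((one_lt_inv₀ hpos).2 hlt).le)

/-- `gaussProd x n = T⁰x ⋯ Tⁿx`, which is `|qₙ x - pₙ|` by `cfQ_mul_sub_cfP`. -/
noncomputable def gaussProd (x : ℝ) (n : ℕ) : ℝ := ∏ i ∈ Finset.range (n + 1), gaussMap^[i] x

theorem gaussProd_zero : gaussProd x 0 = x := by simp [gaussProd]

theorem gaussProd_succ (n : ℕ) : gaussProd x (n + 1) = gaussProd x n * gaussMap^[n + 1] x :=
  Finset.prod_range_succ _ _

theorem gaussProd_pos (hx : x ∈ Ico 0 1) (hirr : Irrational x) (n : ℕ) : 0 < gaussProd x n :=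
  Finset.prod_pos fun i _ ↦ (gaussMap_iterate_mem_Ioo hx hirr i).1

theorem cfQ_mul_sub_cfP (hx : x ∈ Ico 0 1) (hirr : Irrational x) :
    ∀ n, (cfQ (cfA x) n : ℝ) * x - cfP (cfA x) n = (-1) ^ n * gaussProd x n
  | 0 => by simp [cfQ, cfP, gaussProd_zero]
  | 1 => by
    have h := inv_gaussMap_iterate hx hirr 0
    simp only [Function.iterate_zero, id_eq, zero_add] at h
    simp only [cfQ, cfP, gaussProd_succ, gaussProd_zero, Nat.cast_one, pow_one]
    rw [show (cfA x 1 : ℝ) = x⁻¹ - gaussMap^[1] x by rw [h]; ring]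
    field_simp [hirr.ne_zero]
    ring
  | n + 2 => by
    have hrec : gaussMap^[n + 1] x * (cfA x (n + 2) + gaussMap^[n + 2] x) = 1 := by
      rw [← inv_gaussMap_iterate hx hirr (n + 1)]
      exact mul_inv_cancel₀ (gaussMap_iterate_mem_Ioo hx hirr (n + 1)).1.ne'
    rw [cfQ_succ_succ, cfP_succ_succ, gaussProd_succ, gaussProd_succ]
    push_cast
    linear_combination (cfA x (n + 2) : ℝ) * cfQ_mul_sub_cfP hx hirr (n + 1) +
      cfQ_mul_sub_cfP hx hirr n - (-1) ^ n * gaussProd x n * hrec -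
      (cfA x (n + 2) : ℝ) * (-1) ^ n * gaussProd_succ n

theorem cfQ_succ_mul_gaussProd_add (hx : x ∈ Ico 0 1) (hirr : Irrational x) (n : ℕ) :
    cfQ (cfA x) (n + 1) * gaussProd x n + cfQ (cfA x) n * gaussProd x (n + 1) = 1 := by
  have hdet : (cfP (cfA x) (n + 1) : ℝ) * cfQ (cfA x) n - cfP (cfA x) n * cfQ (cfA x) (n + 1)
      = (-1) ^ n := by exact_mod_cast cfP_succ_mul_cfQ_sub (cfA x) n
  refine mul_left_cancel₀ (pow_ne_zero n (neg_ne_zero.2 one_ne_zero)) ?_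
  linear_combination hdet - cfQ (cfA x) (n + 1) * cfQ_mul_sub_cfP hx hirr n +
    cfQ (cfA x) n * cfQ_mul_sub_cfP hx hirr (n + 1)

end GaussMap

section BestApproximation

variable {x : ℝ}

theorem gaussProd_le_abs_mul_sub (hx : x ∈ Ico 0 1) (hirr : Irrational x) {m : ℕ} {p q : ℤ}
    (hq : q ≠ 0) (hqm : |q| < cfQ (cfA x) (m + 1)) : gaussProd x m ≤ |(q : ℝ) * x - p| := by
  have hD := gaussProd_pos hx hirr
  have hsign : ((cfQ (cfA x) m : ℤ) * x - (cfP (cfA x) m : ℤ)) *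
      ((cfQ (cfA x) (m + 1) : ℤ) * x - (cfP (cfA x) (m + 1) : ℤ)) ≤ (0 : ℝ) := by
    push_cast
    rw [cfQ_mul_sub_cfP hx hirr, cfQ_mul_sub_cfP hx hirr, pow_succ]
    nlinarith [mul_pos (hD m) (hD (m + 1)), sq_nonneg ((-1 : ℝ) ^ m)]
  calc gaussProd x m = |((cfQ (cfA x) m : ℤ) : ℝ) * x - (cfP (cfA x) m : ℤ)| := by
        push_cast
        rw [cfQ_mul_sub_cfP hx hirr, abs_mul, abs_pow, abs_neg, abs_one, one_pow, one_mul,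
          abs_of_pos (hD m)]
    _ ≤ |(q : ℝ) * x - p| :=
      abs_mul_sub_le_of_unimodular (Nat.cast_nonneg _)
        (by rw [cfP_succ_mul_cfQ_sub, abs_pow, abs_neg, abs_one, one_pow]) hsign hq hqm

theorem lt_gaussProd_of_lt_mul_cfA (hx : x ∈ Ico 0 1) (hirr : Irrational x) {m : ℕ} {e : ℝ}
    (he : 0 < e) (hlt : cfQ (cfA x) (m + 1) * e < 1)
    (hcfA : 1 / (1 - cfQ (cfA x) (m + 1) * e) - 1 < cfA x (m + 2) * cfA x (m + 1)) :
    e < gaussProd x m := by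
  have hf := (gaussMap_iterate_mem_Ioo hx hirr (m + 1)).1
  have ht : (0 : ℝ) < cfQ (cfA x) (m + 1) := by
    exact_mod_cast one_le_cfQ (one_le_cfA hx hirr) (m + 1)
  have hAq : (cfA x (m + 1) * cfQ (cfA x) m : ℝ) ≤ cfQ (cfA x) (m + 1) := by
    exact_mod_cast mul_cfQ_le_cfQ_succ (cfA x) m
  have hBf : cfA x (m + 2) * gaussMap^[m + 1] x < 1 := by
    have hinv : gaussMap^[m + 1] x * (cfA x (m + 2) + gaussMap^[m + 2] x) = 1 := by
      rw [← inv_gaussMap_iterate hx hirr (m + 1)]; exact mul_inv_cancel₀ hf.ne'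
    nlinarith [(gaussMap_iterate_mem_Ioo hx hirr (m + 2)).1]
  have hsum :
      gaussProd x m * (cfQ (cfA x) (m + 1) + cfQ (cfA x) m * gaussMap^[m + 1] x) = 1 := by
    linear_combination cfQ_succ_mul_gaussProd_add hx hirr m - cfQ (cfA x) m * gaussProd_succ m
  set t : ℝ := (cfQ (cfA x) (m + 1) : ℝ)
  set f := gaussMap^[m + 1] x
  set A : ℝ := (cfA x (m + 1) : ℝ)
  set B : ℝ := (cfA x (m + 2) : ℝ)
  set Q : ℝ := (cfQ (cfA x) m : ℝ)
  have hcond : t * e < B * A * (1 - t * e) := by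
    rw [sub_lt_iff_lt_add, div_lt_iff₀ (sub_pos.2 hlt)] at hcfA
    linarith
  have herr : e * (Q * f) < 1 - t * e := by
    refine lt_of_mul_lt_mul_right ?_ (by positivity : 0 ≤ B * A)
    calc e * (Q * f) * (B * A) = A * Q * (e * (B * f)) := by ring
      _ ≤ t * (e * (B * f)) := mul_le_mul_of_nonneg_right hAq (by positivity)
      _ < t * e := by nlinarith [mul_pos ht he]
      _ < (1 - t * e) * (B * A) := by linarith
  have hpos : 0 < t + Q * f := by positivity
  nlinarith

end BestApproximation

theorem kleinbock_wadleigh_non_improvable_general (t₀ : ℝ) (ψ : ℝ → ℝ)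
    (hψpos : ∀ t, t₀ ≤ t → 0 < ψ t)
    (hψlt : ∀ t, t₀ ≤ t → t * ψ t < 1)
    (Ψ : ℝ → ℝ) (hΨ : ∀ t, Ψ t = 1 / (1 - t * ψ t) - 1)
    (x : ℝ) (hx : x ∈ Set.Ico (0 : ℝ) 1) (hirr : Irrational x)
    (h : {n : ℕ | 1 ≤ n ∧
      Ψ ((cfQ (cfA x) n : ℝ)) < (cfA x (n + 1) : ℝ) * (cfA x n : ℝ)}.Infinite) :
    ¬ DirichletImprovable ψ x := by
  rintro ⟨N, hN⟩
  obtain ⟨n, ⟨hn, hΨn⟩, hqn⟩ := ((Nat.frequently_atTop_iff_infinite.2 h).and_eventually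
    ((tendsto_cfQ_atTop (one_le_cfA hx hirr)).eventually_gt_atTop (max N t₀))).exists
  obtain ⟨m, rfl⟩ : ∃ m, n = m + 1 := ⟨n - 1, by omega⟩
  have ht₀ : t₀ ≤ cfQ (cfA x) (m + 1) := (le_max_right _ _).trans hqn.le
  obtain ⟨p, q, hq, hqx, hqt⟩ := hN _ ((le_max_left _ _).trans_lt hqn)
  have hψD : ψ (cfQ (cfA x) (m + 1)) < gaussProd x m :=
    lt_gaussProd_of_lt_mul_cfA hx hirr (hψpos _ ht₀) (hψlt _ ht₀) (by rwa [hΨ] at hΨn)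
  have hDq : gaussProd x m ≤ |(q : ℝ) * x - p| :=
    gaussProd_le_abs_mul_sub hx hirr hq (by exact_mod_cast hqt)
  linarith

theorem kleinbock_wadleigh_non_improvable (t₀ : ℝ) (ht₀ : 1 ≤ t₀) (ψ : ℝ → ℝ)
    (hψpos : ∀ t, t₀ ≤ t → 0 < ψ t)
    (hψmono : ∀ s t : ℝ, t₀ ≤ s → s ≤ t → ψ t ≤ ψ s)
    (hψlt : ∀ t, t₀ ≤ t → t * ψ t < 1)
    (Ψ : ℝ → ℝ) (hΨ : ∀ t, Ψ t = 1 / (1 - t * ψ t) - 1)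
    (x : ℝ) (hx : x ∈ Set.Ico (0 : ℝ) 1) (hirr : Irrational x)
    (h : {n : ℕ | 1 ≤ n ∧
      Ψ ((cfQ (cfA x) n : ℝ)) < (cfA x (n + 1) : ℝ) * (cfA x n : ℝ)}.Infinite) :
    ¬ DirichletImprovable ψ x :=
  kleinbock_wadleigh_non_improvable_general t₀ ψ hψpos hψlt Ψ hΨ x hx hirr h
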